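/- arXiv:2508.08740 — 4 statements merged into one kernel-verified Lean document; each statement's English description precedes it below -/
import Mathlib

section
/- Consider the greedy L-fold allocation process with m bins (m ≥ 1), a parameter L with 1 ≤ L ≤ m, and a sequence of r items with weights d_1 ≥ d_2 ≥ ⋯ ≥ d_r ≥ 0 such that d_i ≤ Δ for every i; let P = Σ_{i=1}^r d_i. Then at the end of the process, every bin has load at most max(4PL/m, Δ). -/
/-!
A bin `b` that receives item `t` has fewer than `L` bins of smaller load, so at least `m - L + 1`
bins carry at least its load; since the total load is at most `L P`, its load before the item
is at most `L P / (m - L + 1) ≤ 3 L P / m` once `m > 4 L`. If that load is positive, the fewer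
than `L` empty bins and the at most `L t` nonempty ones force `m < L (t + 1)`, while the weights
are nonincreasing, so `(t + 1) d_t ≤ P` and `d_t ≤ L P / m`. If it is zero, the new load is
`d_t ≤ Δ`. For `m ≤ 4 L` the trivial bound `P` on every load suffices.
-/

open Finset Function

/-- The loads of the `m` bins after the first `t` items have been processed by the
greedy `L`-fold allocation process with item weights `d : Fin r → ℝ`:
at each step, the current item is assigned to the `L` bins of minimal current load,
ties broken by the fixed linear order on `Fin m` (lexicographic on (load, index)),
and the load of each of these bins increases by the item's weight. -/
noncomputable def greedyLoads {m r : ℕ} (L : ℕ) (d : Fin r → ℝ) : ℕ → Fin m → ℝ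
  | 0 => fun _ => 0
  | (t + 1) =>
      let prev := greedyLoads L d t
      fun b =>
        if h : t < r then
          if {b' : Fin m | prev b' < prev b ∨ (prev b' = prev b ∧ b' < b)}.ncard < L then
            prev b + d ⟨t, h⟩
          else prev b
        else prev b

section LexRank

variable {α β : Type*} [Fintype α] [LinearOrder α] [LinearOrder β]

def lexRank (f : α → β) (x : α) : ℕ := #{y | toLex (f y, y) < toLex (f x, x)}

theorem lexRank_lt_lexRank {f : α → β} {x y : α} (h : toLex (f x, x) < toLex (f y, y)) :
    lexRank f x < lexRank f y := by
  refine card_lt_card ⟨monotone_filter_right _ fun z _ hz => hz.trans h, fun hsub => ?_⟩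
  simpa using hsub (mem_filter.2 ⟨mem_univ x, h⟩)

theorem lexRank_injective (f : α → β) : Injective (lexRank f) := by
  intro x y hxy
  by_contra hne
  have hkey : toLex (f x, x) ≠ toLex (f y, y) := fun h => hne (congrArg Prod.snd h)
  rcases hkey.lt_or_gt with h | h
  · exact (lexRank_lt_lexRank h).ne hxy
  · exact (lexRank_lt_lexRank h).ne' hxy

theorem card_lexRank_lt_le (f : α → β) (L : ℕ) : #{x | lexRank f x < L} ≤ L := by
  calc #{x | lexRank f x < L}
      ≤ #(range L) := card_le_card_of_injOn (lexRank f)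
          (fun x hx => by simpa using (mem_filter.1 hx).2) (lexRank_injective f).injOn
    _ = L := card_range L

theorem card_lt_le_lexRank (f : α → β) (x : α) : #{y | f y < f x} ≤ lexRank f x :=
  card_le_card (monotone_filter_right _ fun _ _ hy => Prod.Lex.lt_iff.2 (Or.inl hy))

theorem ncard_lex_lt_eq_lexRank (f : α → β) (x : α) :
    {y | f y < f x ∨ (f y = f x ∧ y < x)}.ncard = lexRank f x := by
  rw [Set.ncard_eq_toFinset_card', lexRank]
  congr 1
  ext y
  simp [Prod.Lex.lt_iff]

end LexRank

theorem card_le_mul_le_sum {α : Type*} [Fintype α] {f : α → ℝ} (hf : ∀ y, 0 ≤ f y)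
    (x : α) :
    #{y | f x ≤ f y} * f x ≤ ∑ y, f y := by
  calc #{y | f x ≤ f y} * f x
      = #{y | f x ≤ f y} • f x := (nsmul_eq_mul _ _).symm
    _ ≤ ∑ y with f x ≤ f y, f y := card_nsmul_le_sum _ _ _ fun y hy => (mem_filter.1 hy).2
    _ ≤ ∑ y, f y := sum_le_sum_of_subset_of_nonneg (filter_subset _ _) fun y _ _ => hf y

section PaddedWeight

variable {r : ℕ} (d : Fin r → ℝ)

def paddedWeight (t : ℕ) : ℝ := if h : t < r then d ⟨t, h⟩ else 0

variable {d}

theorem paddedWeight_nonneg (hd : ∀ i, 0 ≤ d i) (t : ℕ) : 0 ≤ paddedWeight d t := by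
  unfold paddedWeight
  split_ifs
  exacts [hd _, le_rfl]

theorem sum_range_paddedWeight_le (hd : ∀ i, 0 ≤ d i) (t : ℕ) :
    ∑ i ∈ range t, paddedWeight d i ≤ ∑ i, d i := by
  have hvanish : ∀ i ∈ range t, i ∉ range (min t r) → paddedWeight d i = 0 := by
    intro i hi hi'
    simp only [mem_range] at hi hi'
    simp [paddedWeight, show ¬ i < r by omega]
  calc ∑ i ∈ range t, paddedWeight d i
      = ∑ i ∈ range (min t r), paddedWeight d i :=
        (sum_subset (range_subset_range.2 (min_le_left t r)) hvanish).symm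
    _ ≤ ∑ i ∈ range r, paddedWeight d i :=
        sum_le_sum_of_subset_of_nonneg (range_subset_range.2 (min_le_right t r))
          fun i _ _ => paddedWeight_nonneg hd i
    _ = ∑ i, d i := by
        rw [← Fin.sum_univ_eq_sum_range]
        exact sum_congr rfl fun i _ => dif_pos i.isLt

theorem succ_mul_paddedWeight_le_sum (hanti : Antitone d) (hd : ∀ i, 0 ≤ d i) (t : ℕ) :
    (t + 1) * paddedWeight d t ≤ ∑ i, d i := by
  unfold paddedWeight
  split_ifs with ht
  · set i : Fin r := ⟨t, ht⟩
    calc (t + 1) * d i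
        = #(Iic i) • d i := by rw [Fin.card_Iic, nsmul_eq_mul]; push_cast; rfl
      _ ≤ ∑ j ∈ Iic i, d j := card_nsmul_le_sum _ _ _ fun j hj => hanti (mem_Iic.1 hj)
      _ ≤ ∑ j, d j := sum_le_sum_of_subset_of_nonneg (subset_univ _) fun j _ _ => hd j
  · simpa using sum_nonneg fun i _ => hd i

end PaddedWeight

section Greedy

variable {m r L : ℕ} {d : Fin r → ℝ}

theorem greedyLoads_succ (t : ℕ) (b : Fin m) :
    greedyLoads L d (t + 1) b = greedyLoads L d t b +
      if lexRank (greedyLoads L d t) b < L then paddedWeight d t else 0 := by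
  simp only [greedyLoads, ncard_lex_lt_eq_lexRank, paddedWeight]
  split_ifs <;> simp

theorem card_greedyLoads_ne_zero_le (t : ℕ) :
    #{b : Fin m | greedyLoads L d t b ≠ 0} ≤ L * t := by
  induction t with
  | zero => simp [greedyLoads]
  | succ t ih =>
    have hsub : ({b | greedyLoads L d (t + 1) b ≠ 0} : Finset (Fin m)) ⊆
        ({b | greedyLoads L d t b ≠ 0} : Finset (Fin m)) ∪
          ({b | lexRank (greedyLoads L d t) b < L} : Finset (Fin m)) := by
      intro b
      simp only [mem_filter, mem_univ, true_and, mem_union, greedyLoads_succ]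
      split_ifs with hrec <;> simp_all
    calc #{b : Fin m | greedyLoads L d (t + 1) b ≠ 0}
        ≤ #{b : Fin m | greedyLoads L d t b ≠ 0} + #{b | lexRank (greedyLoads L d t) b < L} :=
          (card_le_card hsub).trans (card_union_le _ _)
      _ ≤ L * t + L := add_le_add ih (card_lexRank_lt_le _ _)
      _ = L * (t + 1) := by ring

variable (hd : ∀ i, 0 ≤ d i)
include hd

theorem greedyLoads_nonneg (t : ℕ) (b : Fin m) : 0 ≤ greedyLoads L d t b := by
  induction t with
  | zero => simp [greedyLoads]
  | succ t ih =>
    rw [greedyLoads_succ]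
    split_ifs
    · exact add_nonneg ih (paddedWeight_nonneg hd t)
    · simpa using ih

theorem greedyLoads_le_sum (t : ℕ) (b : Fin m) : greedyLoads L d t b ≤ ∑ i, d i := by
  suffices h : greedyLoads L d t b ≤ ∑ i ∈ range t, paddedWeight d i from
    h.trans (sum_range_paddedWeight_le hd t)
  induction t with
  | zero => simp [greedyLoads]
  | succ t ih =>
    rw [greedyLoads_succ, sum_range_succ]
    split_ifs
    · exact add_le_add_left ih _
    · linarith [paddedWeight_nonneg hd t]

theorem sum_greedyLoads_le (t : ℕ) : ∑ b : Fin m, greedyLoads L d t b ≤ L * ∑ i, d i := by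
  suffices h : ∑ b : Fin m, greedyLoads L d t b ≤ L * ∑ i ∈ range t, paddedWeight d i from
    h.trans (mul_le_mul_of_nonneg_left (sum_range_paddedWeight_le hd t) (Nat.cast_nonneg L))
  induction t with
  | zero => simp [greedyLoads]
  | succ t ih =>
    have hreceivers : (#{b : Fin m | lexRank (greedyLoads L d t) b < L} : ℝ) ≤ L := by
      exact_mod_cast card_lexRank_lt_le _ _
    simp only [greedyLoads_succ, sum_add_distrib, ← sum_filter, sum_const, nsmul_eq_mul,
      sum_range_succ, mul_add]
    gcongr
    exact paddedWeight_nonneg hd t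

theorem sub_add_one_mul_le_of_receives {t : ℕ} {b : Fin m}
    (hrec : lexRank (greedyLoads L d t) b < L) :
    ((m : ℝ) - L + 1) * greedyLoads L d t b ≤ L * ∑ i, d i := by
  set f := greedyLoads L d t
  have hsplit := card_filter_add_card_filter_not (s := univ) (p := fun y => f y < f b)
  simp only [not_lt, card_univ, Fintype.card_fin] at hsplit
  have hcount : (m : ℝ) - L + 1 ≤ #{y | f b ≤ f y} := by
    have := (card_lt_le_lexRank f b).trans_lt hrec
    have : m + 1 ≤ L + #{y | f b ≤ f y} := by omega
    have : (m : ℝ) + 1 ≤ L + #{y | f b ≤ f y} := by exact_mod_cast this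
    linarith
  calc ((m : ℝ) - L + 1) * f b
      ≤ #{y | f b ≤ f y} * f b := mul_le_mul_of_nonneg_right hcount (greedyLoads_nonneg hd t b)
    _ ≤ ∑ y, f y := card_le_mul_le_sum (greedyLoads_nonneg hd t) b
    _ ≤ L * ∑ i, d i := sum_greedyLoads_le hd t

theorem lt_mul_succ_of_receives {t : ℕ} {b : Fin m}
    (hrec : lexRank (greedyLoads L d t) b < L) (hb : greedyLoads L d t b ≠ 0) :
    m < L * (t + 1) := by
  have hnonempty := card_greedyLoads_ne_zero_le (L := L) (d := d) (m := m) t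
  set f := greedyLoads L d t
  have hpos : 0 < f b := (greedyLoads_nonneg hd t b).lt_of_ne' hb
  have hempty : #{y | f y = 0} < L := by
    refine lt_of_le_of_lt (card_le_card ?_) ((card_lt_le_lexRank f b).trans_lt hrec)
    exact monotone_filter_right _ fun y _ hy => hy ▸ hpos
  have hsplit := card_filter_add_card_filter_not (s := univ) (p := fun y => f y = 0)
  simp only [card_univ, Fintype.card_fin, ← ne_eq] at hsplit
  rw [mul_add, mul_one]
  omega

end Greedy

theorem greedyLoads_le_of_four_mul_lt {m r L : ℕ} {d : Fin r → ℝ} (hanti : Antitone d)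
    (hd : ∀ i, 0 ≤ d i) {Δ : ℝ} (hΔ : ∀ i, d i ≤ Δ) (hlarge : 4 * L < m)
    (t : ℕ) (b : Fin m) :
    greedyLoads L d t b ≤ max (4 * (∑ i, d i) * L / m) Δ := by
  set P := ∑ i, d i
  have hm : (0 : ℝ) < m := Nat.cast_pos.2 (by omega)
  have hP : 0 ≤ P := sum_nonneg fun i _ => hd i
  have hbound : 0 ≤ max (4 * P * L / m) Δ := le_max_of_le_left (by positivity)
  induction t generalizing b with
  | zero => simpa [greedyLoads] using hbound
  | succ t ih =>
    rw [greedyLoads_succ]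
    split_ifs with hrec
    · by_cases hempty : greedyLoads L d t b = 0
      · rw [hempty, zero_add, paddedWeight]
        split_ifs
        exacts [le_max_of_le_right (hΔ _), hbound]
      refine le_max_of_le_left ((le_div_iff₀ hm).2 ?_)
      set f := greedyLoads L d t b
      set w := paddedWeight d t
      have hf : 0 ≤ f := greedyLoads_nonneg hd t b
      have hw : 0 ≤ w := paddedWeight_nonneg hd t
      have hlarge' : (4 * L + 1 : ℝ) ≤ m := by exact_mod_cast hlarge
      have hmt : (m : ℝ) ≤ L * (t + 1) := by
        exact_mod_cast (lt_mul_succ_of_receives hd hrec hempty).le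
      -- `m w ≤ L (t + 1) w ≤ L P` and `m f ≤ 3 (m - L + 1) f ≤ 3 L P`
      have hload : m * f ≤ 3 * (L * P) := by
        nlinarith [sub_add_one_mul_le_of_receives hd hrec]
      have hweight : m * w ≤ L * P := by
        nlinarith [succ_mul_paddedWeight_le_sum hanti hd t]
      linarith
    · simpa using ih b

theorem greedy_allocation_max_load_general
    {m r : ℕ} (L : ℕ)
    (d : Fin r → ℝ) (hmono : ∀ i j : Fin r, i ≤ j → d j ≤ d i)
    (hnonneg : ∀ i : Fin r, 0 ≤ d i) (Δ : ℝ) (hΔ : ∀ i : Fin r, d i ≤ Δ)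
    (P : ℝ) (hP : P = ∑ i : Fin r, d i) :
    ∀ b : Fin m, greedyLoads L d r b ≤ max (4 * P * L / m) Δ := by
  intro b
  subst hP
  rcases le_or_gt m (4 * L) with hsmall | hlarge
  · have hm : (0 : ℝ) < m := Nat.cast_pos.2 b.pos
    have hsmall' : (m : ℝ) ≤ 4 * L := by exact_mod_cast hsmall
    have hsum : 0 ≤ ∑ i, d i := sum_nonneg fun i _ => hnonneg i
    refine le_max_of_le_left ((greedyLoads_le_sum hnonneg r b).trans ?_)
    rw [le_div_iff₀ hm]
    nlinarith
  · exact greedyLoads_le_of_four_mul_lt hmono hnonneg hΔ hlarge r b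

/-- Greedy `L`-fold allocation with `m ≥ 1` bins, `1 ≤ L ≤ m`, and nonincreasing
nonnegative weights `d_1 ≥ ⋯ ≥ d_r ≥ 0` bounded by `Δ`, with total weight `P`:
at the end of the process each bin has load at most `max (4PL/m) Δ`. -/
theorem greedy_allocation_max_load
    {m r : ℕ} (hm : 1 ≤ m) (L : ℕ) (hL1 : 1 ≤ L) (hLm : L ≤ m)
    (d : Fin r → ℝ) (hmono : ∀ i j : Fin r, i ≤ j → d j ≤ d i)
    (hnonneg : ∀ i : Fin r, 0 ≤ d i) (Δ : ℝ) (hΔ : ∀ i : Fin r, d i ≤ Δ)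
    (P : ℝ) (hP : P = ∑ i : Fin r, d i) :
    ∀ b : Fin m, greedyLoads L d r b ≤ max (4 * P * L / m) Δ :=
  greedy_allocation_max_load_general L d hmono hnonneg Δ hΔ P hP
end

section
/- Let F be a finite field with q elements, let r ≥ 1 be an integer, let δ be a real number with 0 < δ < 1, and let d be a natural number with d ≤ (1−δ)(q−1) − 1 (as real numbers). Let s, x ∈ F^r and let A be a subset of F \ {0} with |A| ≥ (1−δ)(q−1). Then for any two multivariate polynomials f, g over F in r variables, each of total degree at most d, if f(s + a • x) = g(s + a • x) for every a ∈ A, then f(s) = g(s). -/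
/-!
Restricted to the line `t ↦ s + t • x`, a polynomial of total degree at most `d` becomes a
univariate polynomial of degree at most `d`. The restrictions of `f` and `g` agree at the more than
`d` points of `A`, hence coincide, and evaluating them at `t = 0` gives `f(s) = g(s)`.
-/

namespace MvPolynomial

variable {σ R : Type*}

section CommSemiring

variable [CommSemiring R]

noncomputable def restrictLine (s x : σ → R) : MvPolynomial σ R →ₐ[R] Polynomial R :=
  aeval fun i => Polynomial.C (x i) * Polynomial.X + Polynomial.C (s i)

theorem eval_restrictLine (s x : σ → R) (P : MvPolynomial σ R) (t : R) :
    (restrictLine s x P).eval t = eval (s + t • x) P := by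
  rw [← Polynomial.coe_aeval_eq_eval, restrictLine, comp_aeval_apply, aeval_eq_eval]
  refine congrArg (eval · P) ?_
  funext i
  simp only [map_add, map_mul, Polynomial.aeval_C, Polynomial.aeval_X, Algebra.algebraMap_self,
    RingHom.id_apply, Pi.add_apply, Pi.smul_apply, smul_eq_mul]
  ring

theorem natDegree_restrictLine_le (s x : σ → R) (P : MvPolynomial σ R) :
    (restrictLine s x P).natDegree ≤ P.totalDegree := by
  simpa [restrictLine] using aeval_natDegree_le P le_rfl _ fun _ => Polynomial.natDegree_linear_le

end CommSemiring

theorem eval_add_smul_eq_of_totalDegree_lt_card [CommRing R] [IsDomain R]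
    {s x : σ → R} {f g : MvPolynomial σ R} {A : Finset R}
    (hf : f.totalDegree < A.card) (hg : g.totalDegree < A.card)
    (hA : ∀ a ∈ A, eval (s + a • x) f = eval (s + a • x) g) (t : R) :
    eval (s + t • x) f = eval (s + t • x) g := by
  have degree_lt {P : MvPolynomial σ R} (hP : P.totalDegree < A.card) :
      (restrictLine s x P).degree < A.card :=
    (Polynomial.degree_le_of_natDegree_le (natDegree_restrictLine_le s x P)).trans_lt
      (by exact_mod_cast hP)
  have hline : restrictLine s x f = restrictLine s x g :=
    Polynomial.eq_of_degrees_lt_of_eval_finset_eq A (degree_lt hf) (degree_lt hg) fun a ha => by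
      simpa only [eval_restrictLine] using hA a ha
  simp only [← eval_restrictLine, hline]

end MvPolynomial

theorem eq_at_base_of_agree_on_line_general
    (F : Type*) [Field F] (q : ℕ)
    (r : ℕ) (δ : ℝ)
    (d : ℕ) (hd : (d : ℝ) ≤ (1 - δ) * ((q : ℝ) - 1) - 1)
    (s x : Fin r → F) (A : Finset F)
    (hAcard : (1 - δ) * ((q : ℝ) - 1) ≤ (A.card : ℝ))
    (f g : MvPolynomial (Fin r) F)
    (hf : f.totalDegree ≤ d) (hg : g.totalDegree ≤ d)
    (hagree : ∀ a ∈ A,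
      MvPolynomial.eval (s + a • x) f = MvPolynomial.eval (s + a • x) g) :
    MvPolynomial.eval s f = MvPolynomial.eval s g := by
  have hdA : d < A.card := by exact_mod_cast (show (d : ℝ) < A.card by linarith)
  simpa using MvPolynomial.eval_add_smul_eq_of_totalDegree_lt_card
    (hf.trans_lt hdA) (hg.trans_lt hdA) hagree 0

/-- Two multivariate polynomials of total degree at most `d ≤ (1−δ)(q−1) − 1` over a
finite field with `q` elements that agree on at least `(1−δ)(q−1)` nonzero parameters
`a` along a line `a ↦ s + a • x` must agree at the base point `s`. -/
theorem eq_at_base_of_agree_on_line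
    (F : Type*) [Field F] [Fintype F] (q : ℕ) (hq : q = Fintype.card F)
    (r : ℕ) (hr : 1 ≤ r) (δ : ℝ) (hδ0 : 0 < δ) (hδ1 : δ < 1)
    (d : ℕ) (hd : (d : ℝ) ≤ (1 - δ) * ((q : ℝ) - 1) - 1)
    (s x : Fin r → F) (A : Finset F) (hA0 : ∀ a ∈ A, a ≠ 0)
    (hAcard : (1 - δ) * ((q : ℝ) - 1) ≤ (A.card : ℝ))
    (f g : MvPolynomial (Fin r) F)
    (hf : f.totalDegree ≤ d) (hg : g.totalDegree ≤ d)
    (hagree : ∀ a ∈ A,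
      MvPolynomial.eval (s + a • x) f = MvPolynomial.eval (s + a • x) g) :
    MvPolynomial.eval s f = MvPolynomial.eval s g :=
  eq_at_base_of_agree_on_line_general F q r δ d hd s x A hAcard f g hf hg hagree
end

section
/- Let F be a finite field with q elements, let r ≥ 1 be an integer, and let δ, δ' be reals with 0 < δ' and δ'·q^r < δ·(q^r − 1). Then for every s ∈ F^r and every I ⊆ F^r with |I| ≤ δ'·q^r, there exists a direction x ∈ F^r \ {0} such that |{ a ∈ F \ {0} : s + a • x ∈ I }| < δ(q − 1). -/
/-!
Double counting: for a fixed nonzero `a`, the map `x ↦ s + a • x` is injective, so at most `|I|`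
directions `x` put `s + a • x` in `I`. Summing over the `q - 1` nonzero scalars, the punctured
lines through `s` meet `I` in at most `(q - 1)|I|` points in total, which is below
`(q^r - 1) δ (q - 1)`; hence one of the `q^r - 1` nonzero directions meets `I` fewer than
`δ (q - 1)` times.
-/

open Finset

section PuncturedLines

variable {K V : Type*} [DivisionRing K] [AddCommGroup V] [Module K V]

theorem card_filter_add_smul_mem_le (s : V) (I : Set V) [Finite I] {a : K} (ha : a ≠ 0)
    (X : Finset V) [DecidablePred (s + a • · ∈ I)] :
    #{x ∈ X | s + a • x ∈ I} ≤ I.ncard := by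
  rw [← Set.ncard_coe_finset]
  refine Set.ncard_le_ncard_of_injOn (s + a • ·) (fun x hx => (mem_filter.1 hx).2) ?_
  exact ((add_right_injective s).comp (smul_right_injective V ha)).injOn

variable [Fintype K]

theorem sum_ncard_punctured_line_inter_le (s : V) (I : Set V) [Finite I] (X : Finset V) :
    ∑ x ∈ X, {a : K | a ≠ 0 ∧ s + a • x ∈ I}.ncard ≤ (Fintype.card K - 1) * I.ncard := by
  classical
  have hline (x : V) : {a : K | a ≠ 0 ∧ s + a • x ∈ I}.ncard
      = #((univ.erase (0 : K)).bipartiteAbove (fun x a => s + a • x ∈ I) x) := by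
    rw [← Set.ncard_coe_finset]; congr 1; ext a; simp
  calc ∑ x ∈ X, {a : K | a ≠ 0 ∧ s + a • x ∈ I}.ncard
      = ∑ a ∈ univ.erase (0 : K), #(X.bipartiteBelow (fun x a => s + a • x ∈ I) a) := by
        simp_rw [hline]; exact sum_card_bipartiteAbove_eq_sum_card_bipartiteBelow _
    _ ≤ ∑ _a ∈ univ.erase (0 : K), I.ncard :=
        sum_le_sum fun a ha => card_filter_add_smul_mem_le s I (ne_of_mem_erase ha) X
    _ = (Fintype.card K - 1) * I.ncard := by
        rw [sum_const, card_erase_of_mem (mem_univ _), card_univ, smul_eq_mul]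

theorem exists_ne_zero_ncard_punctured_line_inter_lt [Fintype V] (s : V) (I : Set V) {c : ℝ}
    (h : ((Fintype.card K : ℝ) - 1) * I.ncard < ((Fintype.card V : ℝ) - 1) * c) :
    ∃ x ≠ 0, ({a : K | a ≠ 0 ∧ s + a • x ∈ I}.ncard : ℝ) < c := by
  classical
  have hcount : (∑ x ∈ univ.erase (0 : V), {a : K | a ≠ 0 ∧ s + a • x ∈ I}.ncard : ℝ)
      ≤ ((Fintype.card K : ℝ) - 1) * I.ncard := by
    have := Nat.cast_le (α := ℝ).2 (sum_ncard_punctured_line_inter_le (K := K) s I (univ.erase 0))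
    rwa [Nat.cast_mul, Nat.cast_sub Fintype.card_pos, Nat.cast_one, Nat.cast_sum] at this
  obtain ⟨x, hx, hlt⟩ := exists_lt_of_sum_lt (s := univ.erase (0 : V))
    (f := fun x => ({a : K | a ≠ 0 ∧ s + a • x ∈ I}.ncard : ℝ)) (g := fun _ => c) <| by
    rw [sum_const, card_erase_of_mem (mem_univ _), card_univ, nsmul_eq_mul,
      Nat.cast_sub Fintype.card_pos, Nat.cast_one]
    exact hcount.trans_lt h
  exact ⟨x, ne_of_mem_erase hx, hlt⟩

end PuncturedLines

theorem exists_good_direction_general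
    (F : Type*) [Field F] [Fintype F]
    (q : ℕ) (hq : q = Fintype.card F)
    (r : ℕ) (δ δ' : ℝ)
    (hδ'δ : δ' * (q : ℝ) ^ r < δ * ((q : ℝ) ^ r - 1)) :
    ∀ (s : Fin r → F) (I : Set (Fin r → F)), (I.ncard : ℝ) ≤ δ' * (q : ℝ) ^ r →
      ∃ x : Fin r → F, x ≠ 0 ∧
        ({a : F | a ≠ 0 ∧ s + a • x ∈ I}.ncard : ℝ) < δ * ((q : ℝ) - 1) := by
  intro s I hI
  have hq1 : (0 : ℝ) < q - 1 := by
    rw [sub_pos, hq, Nat.one_lt_cast]; exact Fintype.one_lt_card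
  refine exists_ne_zero_ncard_punctured_line_inter_lt s I ?_
  rw [← hq, Fintype.card_fun, Fintype.card_fin, ← hq, Nat.cast_pow]
  calc ((q : ℝ) - 1) * I.ncard ≤ (q - 1) * (δ' * q ^ r) := mul_le_mul_of_nonneg_left hI hq1.le
    _ < (q - 1) * (δ * (q ^ r - 1)) := mul_lt_mul_of_pos_left hδ'δ hq1
    _ = (q ^ r - 1) * (δ * (q - 1)) := by ring

/-- Existence of a good direction: if `0 < δ'` and `δ'·q^r < δ·(q^r − 1)`, then for every
`s ∈ F^r` and every erasure set `I` with `|I| ≤ δ'·q^r`, there is a nonzero direction `x`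
such that fewer than `δ(q−1)` of the nonzero parameters `a` satisfy `s + a • x ∈ I`. -/
theorem exists_good_direction
    (F : Type*) [Field F] [Fintype F]
    (q : ℕ) (hq : q = Fintype.card F)
    (r : ℕ) (hr : 1 ≤ r) (δ δ' : ℝ) (hδ'0 : 0 < δ')
    (hδ'δ : δ' * (q : ℝ) ^ r < δ * ((q : ℝ) ^ r - 1)) :
    ∀ (s : Fin r → F) (I : Set (Fin r → F)), (I.ncard : ℝ) ≤ δ' * (q : ℝ) ^ r →
      ∃ x : Fin r → F, x ≠ 0 ∧
        ({a : F | a ≠ 0 ∧ s + a • x ∈ I}.ncard : ℝ) < δ * ((q : ℝ) - 1) :=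
  exists_good_direction_general F q hq r δ δ' hδ'δ
end

section
/- Let δ ∈ (0,1) be real and let q, r be integers with q ≥ 2 + 4/(1−δ), and set d = ⌊(1−δ)(q−1)⌋ − 1. If 1 ≤ r ≤ d, then the binomial coefficient C(r+d, r) satisfies C(r+d, r) ≥ ((1−δ)·q/(2r))^r; equivalently, C(r+d, r) ≥ q^r / ((2/(1−δ))·r)^r. -/
/-!
The binomial coefficient satisfies `C(r + d, r) ≥ (d + 1)^r / r! ≥ (d / r)^r`, and the lower bound
on `q` is exactly what makes `d = ⌊(1 - δ)(q - 1)⌋ - 1` at least `(1 - δ) q / 2`.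
-/

namespace Nat

variable {α : Type*} [Semifield α] [LinearOrder α] [IsStrictOrderedRing α]

theorem div_pow_le_choose_add (n r : ℕ) : ((n : α) / r) ^ r ≤ ((r + n).choose r : α) :=
  calc ((n : α) / r) ^ r = (n : α) ^ r / (r : α) ^ r := div_pow _ _ _
    _ ≤ ((n : α) + 1) ^ r / r ! := by
      gcongr
      · exact le_add_of_nonneg_right zero_le_one
      · exact_mod_cast r.factorial_le_pow
    _ = ((r + n + 1 - r : ℕ) : α) ^ r / r ! := by
      rw [show r + n + 1 - r = n + 1 by omega, Nat.cast_succ]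
    _ ≤ ((r + n).choose r : α) := pow_le_choose r (r + n)

end Nat

theorem sub_two_le_of_eq_floor_sub_one {α : Type*} [Ring α] [LinearOrder α] [IsStrictOrderedRing α]
    [FloorRing α] {x : α} {d : ℤ} (hd : d = ⌊x⌋ - 1) : x - 2 ≤ d := by
  rw [hd, Int.cast_sub, Int.cast_one, ← one_add_one_eq_two, ← sub_sub]
  exact sub_le_sub_right (Int.sub_one_lt_floor x).le 1

theorem mul_div_two_le_mul_sub_one_sub_two {K : Type*} [Field K] [LinearOrder K]
    [IsStrictOrderedRing K] {a q : K} (ha : 0 < a) (hq : 2 + 4 / a ≤ q) :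
    a * q / 2 ≤ a * (q - 1) - 2 := by
  have h := mul_le_mul_of_nonneg_left hq ha.le
  rw [mul_add, mul_div_cancel₀ _ ha.ne'] at h
  linarith

theorem choose_ge_reed_muller_dimension_bound_general
    (δ : ℝ) (hδ1 : δ < 1)
    (q r : ℕ) (hq : 2 + 4 / (1 - δ) ≤ (q : ℝ))
    (d : ℕ) (hd : (d : ℤ) = ⌊(1 - δ) * ((q : ℝ) - 1)⌋ - 1) :
    ((1 - δ) * (q : ℝ) / (2 * (r : ℝ))) ^ r ≤ ((r + d).choose r : ℝ) ∧
    (q : ℝ) ^ r / ((2 / (1 - δ)) * (r : ℝ)) ^ r ≤ ((r + d).choose r : ℝ) := by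
  have hδ : 0 < 1 - δ := by linarith
  have hdeg : (1 - δ) * q / 2 ≤ d := by
    have hfloor := sub_two_le_of_eq_floor_sub_one hd
    push_cast at hfloor
    linarith [mul_div_two_le_mul_sub_one_sub_two hδ hq]
  have hbound : ((1 - δ) * (q : ℝ) / (2 * r)) ^ r ≤ ((r + d).choose r : ℝ) :=
    calc ((1 - δ) * (q : ℝ) / (2 * r)) ^ r = ((1 - δ) * q / 2 / r) ^ r := by rw [div_div]
      _ ≤ ((d : ℝ) / r) ^ r := by gcongr
      _ ≤ ((r + d).choose r : ℝ) := Nat.div_pow_le_choose_add d r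
  refine ⟨hbound, ?_⟩
  rwa [← div_pow, div_mul_eq_mul_div, div_div_eq_mul_div, mul_comm (q : ℝ)]

/-- Dimension lower bound for Reed–Muller codes: for `δ ∈ (0,1)`, integers `q, r` with
`q ≥ 2 + 4/(1−δ)`, and `d = ⌊(1−δ)(q−1)⌋ − 1`, if `1 ≤ r ≤ d` then
`C(r+d, r) ≥ ((1−δ)·q/(2r))^r`, equivalently `C(r+d, r) ≥ q^r / ((2/(1−δ))·r)^r`. -/
theorem choose_ge_reed_muller_dimension_bound
    (δ : ℝ) (hδ0 : 0 < δ) (hδ1 : δ < 1)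
    (q r : ℕ) (hq : 2 + 4 / (1 - δ) ≤ (q : ℝ))
    (d : ℕ) (hd : (d : ℤ) = ⌊(1 - δ) * ((q : ℝ) - 1)⌋ - 1)
    (hr1 : 1 ≤ r) (hrd : r ≤ d) :
    ((1 - δ) * (q : ℝ) / (2 * (r : ℝ))) ^ r ≤ ((r + d).choose r : ℝ) ∧
    (q : ℝ) ^ r / ((2 / (1 - δ)) * (r : ℝ)) ^ r ≤ ((r + d).choose r : ℝ) :=
  choose_ge_reed_muller_dimension_bound_general δ hδ1 q r hq d hd
end
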